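/- For every real number a₂ ≥ 1, every integer a₃ ≥ 1, every real s with 0 < s ≤ 1/2, and every natural number t, one has (⌊t/a₃⌋ + a₂)^{-2s} ≤ a₃ · (t + a₂)^{-2s}, where ⌊t/a₃⌋ denotes the integer part of t/a₃. -/

import Mathlib

/-! Since `a₃ * ⌊t/a₃⌋ ≥ t - a₃ + 1` and `a₂ ≥ 1`, we get `t + a₂ ≤ a₃ (⌊t/a₃⌋ + a₂)`. Raising to the
power `-2s` reverses this up to the factor `a₃ ^ (2s)`, and `a₃ ^ (2s) ≤ a₃` because `a₃ ≥ 1`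
and `2s ≤ 1`. -/

open Real

theorem Nat.add_le_mul_div_add (t : ℕ) {a₃ : ℕ} (ha₃ : 0 < a₃) {a₂ : ℝ} (ha₂ : 1 ≤ a₂) :
    (t : ℝ) + a₂ ≤ a₃ * ((t / a₃ : ℕ) + a₂) := by
  have hdiv : t + 1 ≤ a₃ * (t / a₃ + 1) := Nat.lt_mul_div_succ t ha₃
  have hdivR : (t : ℝ) + 1 ≤ a₃ * ((t / a₃ : ℕ) + 1) := by exact_mod_cast hdiv
  have ha₃R : (1 : ℝ) ≤ a₃ := by exact_mod_cast ha₃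
  linarith [mul_nonneg (sub_nonneg.2 ha₃R) (sub_nonneg.2 ha₂)]

theorem Real.rpow_le_mul_rpow_of_le_mul {x y c p : ℝ} (hx : 0 ≤ x) (hy : 0 ≤ y) (hc : 1 ≤ c)
    (hp0 : 0 ≤ p) (hp1 : p ≤ 1) (h : y ≤ c * x) : y ^ p ≤ c * x ^ p :=
  calc y ^ p ≤ (c * x) ^ p := rpow_le_rpow hy h hp0
    _ = c ^ p * x ^ p := mul_rpow (by linarith) hx
    _ ≤ c * x ^ p := by gcongr; exact rpow_le_self_of_one_le hc hp1

theorem Real.rpow_neg_le_mul_rpow_neg_of_le_mul {x y c p : ℝ} (hx : 0 < x) (hy : 0 < y)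
    (hc : 1 ≤ c) (hp0 : 0 ≤ p) (hp1 : p ≤ 1) (h : y ≤ c * x) : x ^ (-p) ≤ c * y ^ (-p) := by
  rw [rpow_neg hx.le, rpow_neg hy.le, ← div_eq_mul_inv,
    inv_le_comm₀ (rpow_pos_of_pos hx p) (div_pos (by linarith) (rpow_pos_of_pos hy p)), inv_div,
    div_le_iff₀ (by linarith)]
  exact (rpow_le_mul_rpow_of_le_mul hx.le hy.le hc hp0 hp1 h).trans_eq (mul_comm _ _)

/-- Estimate in the proof of Corollary 1 bounding the stepwise noise-intensity
coefficient: `(⌊t/a₃⌋ + a₂)^{-2s} ≤ a₃ · (t + a₂)^{-2s}`. -/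
theorem stmt10 (a₂ : ℝ) (ha₂ : 1 ≤ a₂) (a₃ : ℕ) (ha₃ : 1 ≤ a₃)
    (s : ℝ) (hs0 : 0 < s) (hs : s ≤ 1 / 2) (t : ℕ) :
    ((↑(t / a₃) : ℝ) + a₂) ^ (-(2 * s)) ≤ (a₃ : ℝ) * ((t : ℝ) + a₂) ^ (-(2 * s)) :=
  rpow_neg_le_mul_rpow_neg_of_le_mul (by positivity) (by positivity) (by exact_mod_cast ha₃)
    (by linarith) (by linarith) (Nat.add_le_mul_div_add t ha₃ ha₂)
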